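/- Let v1, v2 and T be jointly distributed random variables taking values in finite nonempty sets and let z1 = f(v1) for a deterministic (measurable) function f be a sufficient representation, i.e. I(z1;v2) = I(v1;v2). Then the Bayes error rate Pe := 1 − E_{z1}[max_t P(T = t | z1)] satisfies Pe ≤ 1 − exp(−(H(T) − I(z1;T|v2) − (I(v1;v2) − I(v1;v2|T)))). -/

import Mathlib

open scoped BigOperators

/-- Probability that the random variable `X` (on a finite sample space `Ω`
with probability mass function `p`) takes the value `x`. -/
noncomputable def pr {Ω S : Type*} [Fintype Ω] [DecidableEq S]
    (p : Ω → ℝ) (X : Ω → S) (x : S) : ℝ :=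
  ∑ ω, if X ω = x then p ω else 0

/-- Shannon entropy (natural logarithm) of a random variable `X`. -/
noncomputable def entropy {Ω S : Type*} [Fintype Ω] [Fintype S] [DecidableEq S]
    (p : Ω → ℝ) (X : Ω → S) : ℝ :=
  -∑ x, pr p X x * Real.log (pr p X x)

/-- Conditional Shannon entropy `H(X | Y)`. -/
noncomputable def condEntropy {Ω S U : Type*} [Fintype Ω] [Fintype S] [DecidableEq S]
    [Fintype U] [DecidableEq U] (p : Ω → ℝ) (X : Ω → S) (Y : Ω → U) : ℝ :=
  entropy p (fun ω => (X ω, Y ω)) - entropy p Y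

/-- Mutual information `I(X; Y)`. -/
noncomputable def mi {Ω S U : Type*} [Fintype Ω] [Fintype S] [DecidableEq S]
    [Fintype U] [DecidableEq U] (p : Ω → ℝ) (X : Ω → S) (Y : Ω → U) : ℝ :=
  entropy p X + entropy p Y - entropy p (fun ω => (X ω, Y ω))

/-- Conditional mutual information `I(X; Y | Z)`. -/
noncomputable def cmi {Ω S U W : Type*} [Fintype Ω] [Fintype S] [DecidableEq S]
    [Fintype U] [DecidableEq U] [Fintype W] [DecidableEq W]
    (p : Ω → ℝ) (X : Ω → S) (Y : Ω → U) (Z : Ω → W) : ℝ :=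
  mi p X (fun ω => (Y ω, Z ω)) - mi p X Z

/-- Conditional probability `P(X = x | Y = y)` (with junk value `0` when
`P(Y = y) = 0`, via real division). -/
noncomputable def condProb {Ω S U : Type*} [Fintype Ω] [DecidableEq S] [DecidableEq U]
    (p : Ω → ℝ) (X : Ω → S) (Y : Ω → U) (x : S) (y : U) : ℝ :=
  pr p (fun ω => (X ω, Y ω)) (x, y) / pr p Y y

/-- Bayes error rate `Pe = 1 − E_{p(z)}[max_t P(T = t | z)]`, the lowest
achievable error of any classifier predicting `T` from `Z`. -/
noncomputable def bayesError {Ω A B : Type*} [Fintype Ω]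
    [Fintype A] [DecidableEq A] [Nonempty A] [Fintype B] [DecidableEq B]
    (p : Ω → ℝ) (T : Ω → A) (Z : Ω → B) : ℝ :=
  1 - ∑ z, pr p Z z * ⨆ t, condProb p T Z t z

/-! Weighted AM–GM gives `E[max_t p(t | z)] ≥ E[p(T | Z)] ≥ exp(−H(T | Z))`, so
`Pe ≤ 1 − exp(−H(T | Z))` for `Z = f(v1)`. Writing `H(T | Z) = H(T) − I(Z; T)`, the symmetry
`I(Z; T) − I(Z; T | v2) = I(Z; v2) − I(Z; v2 | T)` of interaction information, sufficiency
`I(Z; v2) = I(v1; v2)` and the data processing inequality `I(Z; v2 | T) ≤ I(v1; v2 | T)` give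
`I(Z; T) ≥ I(Z; T | v2) + I(v1; v2) − I(v1; v2 | T)`. -/

open Real

section Probability

variable {Ω S U : Type*} [Fintype Ω] [DecidableEq S] [DecidableEq U] {p : Ω → ℝ}

theorem pr_nonneg (hp : ∀ ω, 0 ≤ p ω) (X : Ω → S) (x : S) : 0 ≤ pr p X x :=
  Finset.sum_nonneg fun ω _ => by split_ifs <;> simp [hp ω]

theorem le_pr_apply (hp : ∀ ω, 0 ≤ p ω) (X : Ω → S) (ω : Ω) : p ω ≤ pr p X (X ω) := by
  simpa [pr] using Finset.single_le_sum (f := fun ω' => if X ω' = X ω then p ω' else 0)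
    (fun ω' _ => by split_ifs <;> simp [hp ω']) (Finset.mem_univ ω)

theorem pr_le_pr_of_imp (hp : ∀ ω, 0 ≤ p ω) {X : Ω → S} {Y : Ω → U} {x : S} {y : U}
    (h : ∀ ω, X ω = x → Y ω = y) : pr p X x ≤ pr p Y y :=
  Finset.sum_le_sum fun ω _ => by
    by_cases hx : X ω = x
    · simp [hx, h ω hx]
    · split_ifs <;> simp [hp ω]

theorem sum_pr_mul [Fintype S] (X : Ω → S) (g : S → ℝ) :
    ∑ x, pr p X x * g x = ∑ ω, p ω * g (X ω) := by
  simp only [pr, Finset.sum_mul, ite_mul, zero_mul]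
  rw [Finset.sum_comm]
  simp

theorem sum_pr_eq_one [Fintype S] (hp1 : ∑ ω, p ω = 1) (X : Ω → S) : ∑ x, pr p X x = 1 := by
  simpa [hp1] using sum_pr_mul (p := p) X fun _ => 1

theorem sum_pr_pair_fst [Fintype S] (X : Ω → S) (Y : Ω → U) (y : U) :
    ∑ x, pr p (fun ω => (X ω, Y ω)) (x, y) = pr p Y y := by
  simp only [pr]
  rw [Finset.sum_comm]
  refine Finset.sum_congr rfl fun ω _ => ?_
  by_cases h : Y ω = y <;> simp [h]

theorem pr_apply_congr {X : Ω → S} {Y : Ω → U} (h : ∀ ω ω', X ω = X ω' ↔ Y ω = Y ω')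
    (ω : Ω) : pr p X (X ω) = pr p Y (Y ω) :=
  Finset.sum_congr rfl fun ω' _ => by simp only [h ω']

end Probability

section Entropy

variable {Ω S U W : Type*} [Fintype Ω] [Fintype S] [DecidableEq S]
  [Fintype U] [DecidableEq U] [Fintype W] [DecidableEq W] {p : Ω → ℝ}

theorem entropy_eq_sum (X : Ω → S) : entropy p X = -∑ ω, p ω * log (pr p X (X ω)) := by
  rw [entropy, sum_pr_mul X fun x => log (pr p X x)]

theorem entropy_congr {X : Ω → S} {Y : Ω → U} (h : ∀ ω ω', X ω = X ω' ↔ Y ω = Y ω') :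
    entropy p X = entropy p Y := by
  simp only [entropy_eq_sum, pr_apply_congr h]

end Entropy

section Inequalities

variable {ι : Type*} [Fintype ι]

theorem sum_mul_log_div_nonneg {q r : ι → ℝ} (hq : ∀ i, 0 ≤ q i) (hr : ∀ i, 0 ≤ r i)
    (hqr : ∀ i, 0 < q i → 0 < r i) (hsum : ∑ i, r i ≤ ∑ i, q i) :
    0 ≤ ∑ i, q i * log (q i / r i) := by
  have hterm : ∀ i, q i - r i ≤ q i * log (q i / r i) := by
    intro i
    rcases (hq i).eq_or_lt with h | h
    · simp [← h, hr i]
    · have hri := hqr i h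
      calc q i - r i = q i * (1 - (q i / r i)⁻¹) := by field_simp
        _ ≤ q i * log (q i / r i) :=
          mul_le_mul_of_nonneg_left (one_sub_inv_le_log_of_pos (div_pos h hri)) h.le
  calc (0 : ℝ) ≤ ∑ i, (q i - r i) := by rw [Finset.sum_sub_distrib]; linarith
    _ ≤ ∑ i, q i * log (q i / r i) := Finset.sum_le_sum fun i _ => hterm i

theorem exp_sum_mul_log_le {w g : ι → ℝ} (hw : ∀ i, 0 ≤ w i) (hw1 : ∑ i, w i = 1)
    (hg : ∀ i, 0 < w i → 0 < g i) : exp (∑ i, w i * log (g i)) ≤ ∑ i, w i * g i :=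
  calc exp (∑ i, w i * log (g i)) ≤ ∑ i, w i * exp (log (g i)) := by
        simpa only [smul_eq_mul] using
          convexOn_exp.map_sum_le (fun i _ => hw i) hw1 fun i _ => Set.mem_univ _
    _ = ∑ i, w i * g i := Finset.sum_congr rfl fun i _ => by
        rcases (hw i).eq_or_lt with h | h
        · simp [← h]
        · rw [exp_log (hg i h)]

end Inequalities

section Information

variable {Ω S S' U W : Type*} [Fintype Ω] [Fintype S] [DecidableEq S] [Fintype S']
  [DecidableEq S'] [Fintype U] [DecidableEq U] [Fintype W] [DecidableEq W] {p : Ω → ℝ}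

theorem cmi_eq_sum (hp : ∀ ω, 0 ≤ p ω) (X : Ω → S) (Y : Ω → U) (Z : Ω → W) :
    cmi p X Y Z = ∑ ω, p ω * log (pr p (fun ω => (X ω, Y ω, Z ω)) (X ω, Y ω, Z ω) /
      (pr p (fun ω => (X ω, Z ω)) (X ω, Z ω) * pr p (fun ω => (Y ω, Z ω)) (Y ω, Z ω) /
        pr p Z (Z ω))) := by
  have hterm : ∀ ω, p ω * log (pr p (fun ω => (X ω, Y ω, Z ω)) (X ω, Y ω, Z ω) /
      (pr p (fun ω => (X ω, Z ω)) (X ω, Z ω) * pr p (fun ω => (Y ω, Z ω)) (Y ω, Z ω) /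
        pr p Z (Z ω))) =
      p ω * log (pr p (fun ω => (X ω, Y ω, Z ω)) (X ω, Y ω, Z ω)) +
        p ω * log (pr p Z (Z ω)) - p ω * log (pr p (fun ω => (X ω, Z ω)) (X ω, Z ω)) -
        p ω * log (pr p (fun ω => (Y ω, Z ω)) (Y ω, Z ω)) := by
    intro ω
    rcases (hp ω).eq_or_lt with h | h
    · simp [← h]
    · have hXYZ : pr p (fun ω => (X ω, Y ω, Z ω)) (X ω, Y ω, Z ω) ≠ 0 :=
        (h.trans_le (le_pr_apply hp _ ω)).ne'
      have hXZ : pr p (fun ω => (X ω, Z ω)) (X ω, Z ω) ≠ 0 := (h.trans_le (le_pr_apply hp _ ω)).ne'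
      have hYZ : pr p (fun ω => (Y ω, Z ω)) (Y ω, Z ω) ≠ 0 := (h.trans_le (le_pr_apply hp _ ω)).ne'
      have hZ : pr p Z (Z ω) ≠ 0 := (h.trans_le (le_pr_apply hp _ ω)).ne'
      rw [log_div hXYZ (div_ne_zero (mul_ne_zero hXZ hYZ) hZ),
        log_div (mul_ne_zero hXZ hYZ) hZ, log_mul hXZ hYZ]
      ring
  simp only [cmi, mi, entropy_eq_sum, hterm, Finset.sum_add_distrib, Finset.sum_sub_distrib]
  ring

/-- Gibbs' inequality against the weights `p(x,z) p(y,z) / p(z)`, which sum to at most one. -/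
theorem cmi_nonneg (hp : ∀ ω, 0 ≤ p ω) (hp1 : ∑ ω, p ω = 1)
    (X : Ω → S) (Y : Ω → U) (Z : Ω → W) : 0 ≤ cmi p X Y Z := by
  rw [cmi_eq_sum hp, ← sum_pr_mul (fun ω => (X ω, Y ω, Z ω)) fun v =>
    log (pr p (fun ω => (X ω, Y ω, Z ω)) v / (pr p (fun ω => (X ω, Z ω)) (v.1, v.2.2) *
      pr p (fun ω => (Y ω, Z ω)) v.2 / pr p Z v.2.2))]
  refine sum_mul_log_div_nonneg (fun v => pr_nonneg hp _ _)
    (fun v => div_nonneg (mul_nonneg (pr_nonneg hp _ _) (pr_nonneg hp _ _)) (pr_nonneg hp _ _))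
    (fun v hv => ?_) ?_
  · have hXZ : 0 < pr p (fun ω => (X ω, Z ω)) (v.1, v.2.2) :=
      hv.trans_le (pr_le_pr_of_imp hp fun ω h => by rw [← h])
    have hYZ : 0 < pr p (fun ω => (Y ω, Z ω)) v.2 :=
      hv.trans_le (pr_le_pr_of_imp hp fun ω h => by rw [← h])
    have hZ : 0 < pr p Z v.2.2 := hv.trans_le (pr_le_pr_of_imp hp fun ω h => by rw [← h])
    positivity
  · calc ∑ v : S × U × W, pr p (fun ω => (X ω, Z ω)) (v.1, v.2.2) *
          pr p (fun ω => (Y ω, Z ω)) v.2 / pr p Z v.2.2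
        = ∑ x, ∑ z, pr p (fun ω => (X ω, Z ω)) (x, z) *
            ((∑ y, pr p (fun ω => (Y ω, Z ω)) (y, z)) / pr p Z z) := by
          simp only [Fintype.sum_prod_type, Finset.mul_sum, Finset.sum_div, mul_div_assoc]
          exact Finset.sum_congr rfl fun x _ => Finset.sum_comm
      _ ≤ ∑ x, ∑ z, pr p (fun ω => (X ω, Z ω)) (x, z) := by
          refine Finset.sum_le_sum fun x _ => Finset.sum_le_sum fun z _ => ?_
          refine mul_le_of_le_one_right (pr_nonneg hp _ _) ?_
          rw [sum_pr_pair_fst]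
          exact div_self_le_one _
      _ = ∑ v, pr p (fun ω => (X ω, Y ω, Z ω)) v := by
          rw [← Fintype.sum_prod_type', sum_pr_eq_one hp1, sum_pr_eq_one hp1]

theorem cmi_comp_le (hp : ∀ ω, 0 ≤ p ω) (hp1 : ∑ ω, p ω = 1) (f : S → S')
    (X : Ω → S) (Y : Ω → U) (Z : Ω → W) : cmi p (fun ω => f (X ω)) Y Z ≤ cmi p X Y Z := by
  -- the difference is `I(Y; X | f X, Z)`
  have h := cmi_nonneg hp hp1 Y X fun ω => (f (X ω), Z ω)
  have h₁ : entropy p (fun ω => (X ω, f (X ω), Z ω)) = entropy p (fun ω => (X ω, Z ω)) :=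
    entropy_congr fun ω ω' => by aesop
  have h₂ : entropy p (fun ω => (Y ω, X ω, f (X ω), Z ω)) = entropy p (fun ω => (X ω, Y ω, Z ω)) :=
    entropy_congr fun ω ω' => by aesop
  have h₃ : entropy p (fun ω => (Y ω, f (X ω), Z ω)) =
      entropy p (fun ω => (f (X ω), Y ω, Z ω)) :=
    entropy_congr fun ω ω' => by aesop
  simp only [cmi, mi] at h ⊢
  linarith

theorem mi_sub_cmi_comm (X : Ω → S) (Y : Ω → U) (Z : Ω → W) :
    mi p X Y - cmi p X Y Z = mi p X Z - cmi p X Z Y := by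
  have h₁ : entropy p (fun ω => (Y ω, Z ω)) = entropy p (fun ω => (Z ω, Y ω)) :=
    entropy_congr fun ω ω' => by aesop
  have h₂ : entropy p (fun ω => (X ω, Y ω, Z ω)) = entropy p (fun ω => (X ω, Z ω, Y ω)) :=
    entropy_congr fun ω ω' => by aesop
  simp only [cmi, mi]
  linarith

theorem condEntropy_eq_entropy_sub_mi (X : Ω → S) (Y : Ω → U) :
    condEntropy p X Y = entropy p X - mi p Y X := by
  have h : entropy p (fun ω => (X ω, Y ω)) = entropy p (fun ω => (Y ω, X ω)) :=
    entropy_congr fun ω ω' => by aesop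
  rw [condEntropy, mi, h]
  ring

theorem condEntropy_eq_sum (hp : ∀ ω, 0 ≤ p ω) (X : Ω → S) (Y : Ω → U) :
    condEntropy p X Y = -∑ ω, p ω * log (condProb p X Y (X ω) (Y ω)) := by
  rw [condEntropy, entropy_eq_sum, entropy_eq_sum, neg_sub_neg, ← Finset.sum_sub_distrib,
    ← Finset.sum_neg_distrib]
  refine Finset.sum_congr rfl fun ω _ => ?_
  rcases (hp ω).eq_or_lt with h | h
  · simp [← h]
  · have hXY : pr p (fun ω => (X ω, Y ω)) (X ω, Y ω) ≠ 0 := (h.trans_le (le_pr_apply hp _ ω)).ne'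
    have hY : pr p Y (Y ω) ≠ 0 := (h.trans_le (le_pr_apply hp _ ω)).ne'
    rw [condProb, log_div hXY hY]
    ring

theorem exp_neg_condEntropy_le [Nonempty S] (hp : ∀ ω, 0 ≤ p ω) (hp1 : ∑ ω, p ω = 1)
    (X : Ω → S) (Y : Ω → U) :
    exp (-condEntropy p X Y) ≤ ∑ y, pr p Y y * ⨆ x, condProb p X Y x y := by
  rw [condEntropy_eq_sum hp, neg_neg, sum_pr_mul Y fun y => ⨆ x, condProb p X Y x y]
  refine (exp_sum_mul_log_le hp hp1 fun ω h => ?_).trans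
    (Finset.sum_le_sum fun ω _ => mul_le_mul_of_nonneg_left ?_ (hp ω))
  · exact div_pos (h.trans_le (le_pr_apply hp _ ω)) (h.trans_le (le_pr_apply hp _ ω))
  · exact le_ciSup (Set.finite_range fun x => condProb p X Y x (Y ω)).bddAbove (X ω)

theorem bayesError_le [Nonempty S] (hp : ∀ ω, 0 ≤ p ω) (hp1 : ∑ ω, p ω = 1)
    (X : Ω → S) (Y : Ω → U) : bayesError p X Y ≤ 1 - exp (-condEntropy p X Y) :=
  sub_le_sub_left (exp_neg_condEntropy_le hp hp1 X Y) 1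

end Information

theorem bayes_error_of_sufficient_general
    {Ω V1 V2 Z1 A : Type*} [Fintype Ω]
    [Fintype V1] [DecidableEq V1]
    [Fintype V2] [DecidableEq V2]
    [Fintype Z1] [DecidableEq Z1]
    [Fintype A] [DecidableEq A] [Nonempty A]
    (p : Ω → ℝ) (hp : ∀ ω, 0 ≤ p ω) (hp1 : ∑ ω, p ω = 1)
    (v1 : Ω → V1) (v2 : Ω → V2) (T : Ω → A) (f : V1 → Z1)
    (hsuf : mi p (fun ω => f (v1 ω)) v2 = mi p v1 v2) :
    bayesError p T (fun ω => f (v1 ω)) ≤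
      1 - Real.exp (-(entropy p T - cmi p (fun ω => f (v1 ω)) T v2 -
        (mi p v1 v2 - cmi p v1 v2 T))) := by
  have hdpi := cmi_comp_le hp hp1 f v1 v2 T
  have hsym := mi_sub_cmi_comm (p := p) (fun ω => f (v1 ω)) T v2
  have hcond : condEntropy p T (fun ω => f (v1 ω)) ≤
      entropy p T - cmi p (fun ω => f (v1 ω)) T v2 - (mi p v1 v2 - cmi p v1 v2 T) := by
    rw [condEntropy_eq_entropy_sub_mi]
    linarith
  exact (bayesError_le hp hp1 T _).trans (by gcongr)

/-- **Bayes error rate of a sufficient representation.** If `z1 = f ∘ v1` is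
sufficient for `v2` (`I(z1; v2) = I(v1; v2)`), then its Bayes error rate for
predicting `T` satisfies
`Pe ≤ 1 − exp(−(H(T) − I(z1; T | v2) − (I(v1; v2) − I(v1; v2 | T))))`. -/
theorem bayes_error_of_sufficient
    {Ω V1 V2 Z1 A : Type*} [Fintype Ω]
    [Fintype V1] [DecidableEq V1] [Nonempty V1]
    [Fintype V2] [DecidableEq V2] [Nonempty V2]
    [Fintype Z1] [DecidableEq Z1] [Nonempty Z1]
    [Fintype A] [DecidableEq A] [Nonempty A]
    (p : Ω → ℝ) (hp : ∀ ω, 0 ≤ p ω) (hp1 : ∑ ω, p ω = 1)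
    (v1 : Ω → V1) (v2 : Ω → V2) (T : Ω → A) (f : V1 → Z1)
    (hsuf : mi p (fun ω => f (v1 ω)) v2 = mi p v1 v2) :
    bayesError p T (fun ω => f (v1 ω)) ≤
      1 - Real.exp (-(entropy p T - cmi p (fun ω => f (v1 ω)) T v2 -
        (mi p v1 v2 - cmi p v1 v2 T))) :=
  bayes_error_of_sufficient_general p hp hp1 v1 v2 T f hsuf
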